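/- arXiv:1912.02392 — 4 statements merged into one kernel-verified Lean document; each statement's English description precedes it below -/
import Mathlib

section
/- Let A be a 2^m × 2^n matrix and B a 2^{M−m} × 2^{N−n} matrix, and let 0 ≤ m' ≤ M, 0 ≤ n' ≤ N. Then the spectral norm of the rearrangement of A⊗B under configuration (m',n') factorizes: ‖R_{m',n'}[A⊗B]‖_S = ‖R_{m∧m', n∧n'}[A]‖_S · ‖R_{(m'−m)₊, (n'−n)₊}[B]‖_S, where x₊ = max(x,0). -/
/-!
Read the row index of the `2^M × 2^N` matrix `A ⊗ B` in binary: its leading `m` bits index `A`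
and the rest index `B`, while `R_{m',n'}` sends the leading `m'` bits to the rows of the
rearrangement and the rest to its columns. Cutting at both positions, the leading `min m m'` bits
are rows of `R[A]`, the next `(m' - m)₊` bits are rows of `R[B]`, and the remaining bits are the
columns of `R[A]` and `R[B]`; likewise for column indices. Hence `R_{m',n'}[A ⊗ B]` is
`R[A] ⊗ R[B]` with rows and columns permuted. The spectral norm ignores such permutations and is
multiplicative on Kronecker products: `A ⊗ B = (A ⊗ 1)(1 ⊗ B)` with `‖A ⊗ 1‖ ≤ ‖A‖` gives `≤`, and
testing on product vectors `u ⊗ v` gives `≥`.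
-/

open Matrix

/-- Euclidean norm of a real vector. -/
noncomputable def vnorm {n : Type*} [Fintype n] (v : n → ℝ) : ℝ :=
  Real.sqrt (∑ i, v i ^ 2)

/-- Spectral (operator) norm of a real matrix. -/
noncomputable def specNorm {m n : Type*} [Fintype m] [Fintype n] (M : Matrix m n ℝ) : ℝ :=
  sSup {x | ∃ u : n → ℝ, vnorm u = 1 ∧ x = vnorm (M.mulVec u)}

/-- Quotient index `i ↦ i / 2^(Mtot - a)` for `i < 2^Mtot`, `a ≤ Mtot`. -/
def pdiv {Mtot a : ℕ} (h : a ≤ Mtot) (i : Fin (2 ^ Mtot)) : Fin (2 ^ a) :=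
  ⟨(i : ℕ) / 2 ^ (Mtot - a), by
    have h2 : (2:ℕ) ^ Mtot = 2 ^ a * 2 ^ (Mtot - a) := by
      rw [← pow_add, Nat.add_sub_cancel' h]
    have hi : (i : ℕ) < 2 ^ a * 2 ^ (Mtot - a) := i.2.trans_eq h2
    exact (Nat.div_lt_iff_lt_mul (pow_pos (by norm_num) _)).2 hi⟩

/-- Remainder index `i ↦ i % 2^(Mtot - a)` for `i < 2^Mtot`. -/
def pmod {Mtot a : ℕ} (i : Fin (2 ^ Mtot)) : Fin (2 ^ (Mtot - a)) :=
  ⟨(i : ℕ) % 2 ^ (Mtot - a), Nat.mod_lt _ (pow_pos (by norm_num) _)⟩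

/-- Combine a block index and an in-block index into an index of `Fin (2^Mtot)`. -/
def pcomb {Mtot a : ℕ} (h : a ≤ Mtot) (i : Fin (2 ^ a)) (j : Fin (2 ^ (Mtot - a))) :
    Fin (2 ^ Mtot) :=
  ⟨(i : ℕ) * 2 ^ (Mtot - a) + (j : ℕ), by
    have h2 : (2:ℕ) ^ Mtot = 2 ^ a * 2 ^ (Mtot - a) := by
      rw [← pow_add, Nat.add_sub_cancel' h]
    have hi := i.2
    have hj := j.2
    calc (i : ℕ) * 2 ^ (Mtot - a) + (j : ℕ)
        < (i : ℕ) * 2 ^ (Mtot - a) + 2 ^ (Mtot - a) := by omega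
      _ = ((i : ℕ) + 1) * 2 ^ (Mtot - a) := by ring
      _ ≤ 2 ^ a * 2 ^ (Mtot - a) := Nat.mul_le_mul_right _ hi
      _ = 2 ^ Mtot := h2.symm⟩

/-- The rearrangement operator `R_{a,b}` for a `2^Mtot × 2^Ntot` matrix:
partition into a `2^a × 2^b` array of `2^(Mtot-a) × 2^(Ntot-b)` blocks and make
each vectorized block a row. -/
def rearr {Mtot Ntot : ℕ} {a b : ℕ} (ha : a ≤ Mtot) (hb : b ≤ Ntot)
    (C : Matrix (Fin (2 ^ Mtot)) (Fin (2 ^ Ntot)) ℝ) :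
    Matrix (Fin (2 ^ a) × Fin (2 ^ b)) (Fin (2 ^ (Mtot - a)) × Fin (2 ^ (Ntot - b))) ℝ :=
  fun p q => C (pcomb ha p.1 q.1) (pcomb hb p.2 q.2)

/-- The Kronecker product `A ⊗ B` of a `2^m × 2^n` matrix `A` and a
`2^(Mtot-m) × 2^(Ntot-n)` matrix `B`, as a `2^Mtot × 2^Ntot` matrix. -/
def pkron {Mtot Ntot m n : ℕ} (hm : m ≤ Mtot) (hn : n ≤ Ntot)
    (A : Matrix (Fin (2 ^ m)) (Fin (2 ^ n)) ℝ)
    (B : Matrix (Fin (2 ^ (Mtot - m))) (Fin (2 ^ (Ntot - n))) ℝ) :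
    Matrix (Fin (2 ^ Mtot)) (Fin (2 ^ Ntot)) ℝ :=
  fun i j => A (pdiv hm i) (pdiv hn j) * B (pmod i) (pmod j)


open scoped Matrix.Norms.L2Operator Kronecker

section Vnorm

variable {ι κ : Type*} [Fintype ι] [Fintype κ]

lemma vnorm_eq_norm (v : ι → ℝ) : vnorm v = ‖WithLp.toLp 2 v‖ := by
  simp [vnorm, EuclideanSpace.norm_eq]

lemma vnorm_nonneg (v : ι → ℝ) : 0 ≤ vnorm v := Real.sqrt_nonneg _

lemma vnorm_sq (v : ι → ℝ) : vnorm v ^ 2 = ∑ i, v i ^ 2 :=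
  Real.sq_sqrt (Finset.sum_nonneg fun _ _ => sq_nonneg _)

lemma vnorm_smul (c : ℝ) (v : ι → ℝ) : vnorm (c • v) = |c| * vnorm v := by
  rw [vnorm_eq_norm, vnorm_eq_norm, WithLp.toLp_smul, norm_smul, Real.norm_eq_abs]

lemma vnorm_comp_equiv {ι' : Type*} [Fintype ι'] (e : ι' ≃ ι) (v : ι → ℝ) :
    vnorm (v ∘ e) = vnorm v := by
  simp only [vnorm, Function.comp_apply, e.sum_comp (fun i => v i ^ 2)]

lemma vnorm_sq_prod (x : ι × κ → ℝ) : vnorm x ^ 2 = ∑ k, vnorm (fun i => x (i, k)) ^ 2 := by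
  simp only [vnorm_sq, Fintype.sum_prod_type]
  exact Finset.sum_comm

lemma vnorm_prod_mul (u : ι → ℝ) (v : κ → ℝ) :
    vnorm (fun p : ι × κ => u p.1 * v p.2) = vnorm u * vnorm v := by
  rw [vnorm, vnorm, vnorm, ← Real.sqrt_mul (Finset.sum_nonneg fun _ _ => sq_nonneg _),
    Finset.sum_mul_sum, ← Finset.univ_product_univ, Finset.sum_product]
  simp only [mul_pow]

end Vnorm

section SpecNorm

variable {ι κ μ : Type*} [Fintype ι] [Fintype κ] [Fintype μ]

lemma specNorm_eq_l2_opNorm [DecidableEq κ] (M : Matrix ι κ ℝ) : specNorm M = ‖M‖ := by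
  rw [l2_opNorm_def, ← ContinuousLinearMap.sSup_sphere_eq_norm, specNorm]
  congr 1
  ext x
  constructor
  · rintro ⟨u, hu, rfl⟩
    exact ⟨WithLp.toLp 2 u, by simpa [vnorm_eq_norm] using hu, by simp [vnorm_eq_norm]⟩
  · rintro ⟨u, hu, rfl⟩
    exact ⟨u.ofLp, by simpa [vnorm_eq_norm] using hu, by rw [vnorm_eq_norm]; rfl⟩

lemma specNorm_nonneg (M : Matrix ι κ ℝ) : 0 ≤ specNorm M := by
  classical
  exact specNorm_eq_l2_opNorm M ▸ norm_nonneg M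

lemma vnorm_mulVec_le (M : Matrix ι κ ℝ) (v : κ → ℝ) :
    vnorm (M *ᵥ v) ≤ specNorm M * vnorm v := by
  classical
  simpa [specNorm_eq_l2_opNorm, vnorm_eq_norm] using M.l2_opNorm_mulVec (WithLp.toLp 2 v)

lemma specNorm_le_bound {M : Matrix ι κ ℝ} {C : ℝ} (hC : 0 ≤ C)
    (h : ∀ v, vnorm (M *ᵥ v) ≤ C * vnorm v) : specNorm M ≤ C := by
  classical
  rw [specNorm_eq_l2_opNorm, l2_opNorm_def]
  refine ContinuousLinearMap.opNorm_le_bound _ hC fun v => ?_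
  have hv := h v.ofLp
  rw [vnorm_eq_norm, vnorm_eq_norm] at hv
  exact hv

lemma specNorm_mul_le (M : Matrix ι κ ℝ) (N : Matrix κ μ ℝ) :
    specNorm (M * N) ≤ specNorm M * specNorm N := by
  classical
  simpa only [specNorm_eq_l2_opNorm] using M.l2_opNorm_mul N

lemma specNorm_smul (c : ℝ) (M : Matrix ι κ ℝ) : specNorm (c • M) = |c| * specNorm M := by
  classical
  simp only [specNorm_eq_l2_opNorm, norm_smul, Real.norm_eq_abs]

lemma specNorm_submatrix_equiv_le {ι' κ' : Type*} [Fintype ι'] [Fintype κ'] (M : Matrix ι κ ℝ)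
    (e : ι' ≃ ι) (f : κ' ≃ κ) : specNorm (M.submatrix e f) ≤ specNorm M :=
  specNorm_le_bound (specNorm_nonneg M) fun v => by
    rw [submatrix_mulVec_equiv, vnorm_comp_equiv, ← vnorm_comp_equiv f.symm v]
    exact vnorm_mulVec_le M _

lemma specNorm_submatrix_equiv {ι' κ' : Type*} [Fintype ι'] [Fintype κ'] (M : Matrix ι κ ℝ)
    (e : ι' ≃ ι) (f : κ' ≃ κ) : specNorm (M.submatrix e f) = specNorm M := by
  refine le_antisymm (specNorm_submatrix_equiv_le M e f) ?_
  simpa using specNorm_submatrix_equiv_le (M.submatrix e f) e.symm f.symm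

end SpecNorm

section Kronecker

variable {ι κ μ ν : Type*} [Fintype ι] [Fintype κ] [Fintype μ] [Fintype ν]

omit [Fintype ι] [Fintype ν] in
lemma kronecker_one_mulVec [DecidableEq κ] (A : Matrix ι μ ℝ) (x : μ × κ → ℝ) (i : ι) (k : κ) :
    ((A ⊗ₖ (1 : Matrix κ κ ℝ)) *ᵥ x) (i, k) = (A *ᵥ fun j => x (j, k)) i := by
  simp [mulVec, dotProduct, one_apply, Fintype.sum_prod_type]

omit [Fintype ν] in
lemma specNorm_kronecker_one_le [DecidableEq κ] (A : Matrix ι μ ℝ) :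
    specNorm (A ⊗ₖ (1 : Matrix κ κ ℝ)) ≤ specNorm A := by
  refine specNorm_le_bound (specNorm_nonneg A) fun x => ?_
  refine (pow_le_pow_iff_left₀ (vnorm_nonneg _)
    (mul_nonneg (specNorm_nonneg A) (vnorm_nonneg _)) two_ne_zero).1 ?_
  simp only [vnorm_sq_prod, kronecker_one_mulVec, mul_pow, Finset.mul_sum]
  refine Finset.sum_le_sum fun k _ => ?_
  rw [← mul_pow]
  exact pow_le_pow_left₀ (vnorm_nonneg _) (vnorm_mulVec_le A _) 2

omit [Fintype ι] [Fintype κ] [Fintype μ] [Fintype ν] in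
lemma one_kronecker_eq_submatrix [DecidableEq ι] (B : Matrix κ μ ℝ) :
    (1 : Matrix ι ι ℝ) ⊗ₖ B =
      (B ⊗ₖ (1 : Matrix ι ι ℝ)).submatrix (Equiv.prodComm _ _) (Equiv.prodComm _ _) := by
  ext ⟨_, _⟩ ⟨_, _⟩
  simp [one_apply, mul_comm]

lemma specNorm_kronecker_le (A : Matrix ι μ ℝ) (B : Matrix κ ν ℝ) :
    specNorm (A ⊗ₖ B) ≤ specNorm A * specNorm B := by
  classical
  have hfactor : A ⊗ₖ B = (A ⊗ₖ (1 : Matrix κ κ ℝ)) * ((1 : Matrix μ μ ℝ) ⊗ₖ B) := by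
    rw [← mul_kronecker_mul, Matrix.mul_one, Matrix.one_mul]
  calc specNorm (A ⊗ₖ B)
      ≤ specNorm (A ⊗ₖ (1 : Matrix κ κ ℝ)) * specNorm ((1 : Matrix μ μ ℝ) ⊗ₖ B) :=
        hfactor ▸ specNorm_mul_le _ _
    _ ≤ specNorm A * specNorm B := by
        rw [one_kronecker_eq_submatrix, specNorm_submatrix_equiv]
        exact mul_le_mul (specNorm_kronecker_one_le A) (specNorm_kronecker_one_le B)
          (specNorm_nonneg _) (specNorm_nonneg A)

omit [Fintype ι] [Fintype κ] in
lemma kronecker_mulVec_prod_mul (A : Matrix ι μ ℝ) (B : Matrix κ ν ℝ) (u : μ → ℝ) (v : ν → ℝ) :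
    (A ⊗ₖ B) *ᵥ (fun q : μ × ν => u q.1 * v q.2) = fun p => (A *ᵥ u) p.1 * (B *ᵥ v) p.2 := by
  ext ⟨i, k⟩
  simp only [mulVec, dotProduct, kronecker_apply, Fintype.sum_prod_type, Finset.sum_mul_sum]
  exact Finset.sum_congr rfl fun j _ => Finset.sum_congr rfl fun l _ => by ring

lemma le_specNorm_kronecker (A : Matrix ι μ ℝ) (B : Matrix κ ν ℝ) :
    specNorm A * specNorm B ≤ specNorm (A ⊗ₖ B) := by
  set T := specNorm (A ⊗ₖ B)
  have hT : 0 ≤ T := specNorm_nonneg _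
  have hprod : ∀ u v, vnorm (A *ᵥ u) * vnorm (B *ᵥ v) ≤ T * vnorm u * vnorm v := fun u v => by
    rw [← vnorm_prod_mul, ← kronecker_mulVec_prod_mul, mul_assoc, ← vnorm_prod_mul]
    exact vnorm_mulVec_le _ _
  -- Bound `‖B‖` by viewing `hprod` as an estimate for the matrix `‖A u‖ • B`, then likewise `‖A‖`.
  have hB : ∀ u, vnorm (A *ᵥ u) * specNorm B ≤ T * vnorm u := fun u => by
    rw [← abs_of_nonneg (vnorm_nonneg (A *ᵥ u)), ← specNorm_smul]
    refine specNorm_le_bound (mul_nonneg hT (vnorm_nonneg u)) fun v => ?_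
    rw [smul_mulVec, vnorm_smul, abs_of_nonneg (vnorm_nonneg _)]
    exact hprod u v
  rw [mul_comm, ← abs_of_nonneg (specNorm_nonneg B), ← specNorm_smul]
  refine specNorm_le_bound hT fun u => ?_
  rw [smul_mulVec, vnorm_smul, abs_of_nonneg (specNorm_nonneg B), mul_comm]
  exact hB u

lemma specNorm_kronecker (A : Matrix ι μ ℝ) (B : Matrix κ ν ℝ) :
    specNorm (A ⊗ₖ B) = specNorm A * specNorm B :=
  le_antisymm (specNorm_kronecker_le A B) (le_specNorm_kronecker A B)

end Kronecker

-- Truncated subtraction makes one of `q ^ (j - k)`, `q ^ (k - j)` equal to `1`, so these two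
-- formulas cover both orders of `j` and `k`.
theorem Nat.mul_pow_add_div_pow {q k j p r : ℕ} (hq : 0 < q) (hr : r < q ^ k) :
    (p * q ^ k + r) / q ^ j = p / q ^ (j - k) * q ^ (k - j) + r / q ^ min j k := by
  rcases le_total k j with hkj | hjk
  · obtain ⟨d, rfl⟩ := Nat.exists_eq_add_of_le hkj
    rw [pow_add, ← Nat.div_div_eq_div_mul, mul_comm p, Nat.mul_add_div (pow_pos hq k),
      Nat.div_eq_of_lt hr]
    simp [hr]
  · obtain ⟨d, rfl⟩ := Nat.exists_eq_add_of_le hjk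
    have hsplit : p * q ^ (j + d) + r = q ^ j * (p * q ^ d) + r := by ring
    rw [hsplit, Nat.mul_add_div (pow_pos hq j)]
    simp

theorem Nat.mul_pow_add_mod_pow {q k j p r : ℕ} (hr : r < q ^ k) :
    (p * q ^ k + r) % q ^ j = p % q ^ (j - k) * q ^ min j k + r % q ^ min j k := by
  rcases le_total k j with hkj | hjk
  · obtain ⟨d, rfl⟩ := Nat.exists_eq_add_of_le hkj
    rw [pow_add, Nat.mod_mul, mul_comm p, Nat.mul_add_mod, Nat.mul_add_div (by omega),
      Nat.div_eq_of_lt hr]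
    simp [mul_comm, add_comm]
  · obtain ⟨d, rfl⟩ := Nat.exists_eq_add_of_le hjk
    have hsplit : p * q ^ (j + d) + r = q ^ j * (p * q ^ d) + r := by ring
    rw [hsplit, Nat.mul_add_mod]
    simp [Nat.mod_one]

def finPowSplit {c a b : ℕ} (h : c = a + b) : Fin (2 ^ c) ≃ Fin (2 ^ a) × Fin (2 ^ b) :=
  (finCongr (by rw [h, pow_add])).trans finProdFinEquiv.symm

@[simp]
lemma finPowSplit_fst_val {c a b : ℕ} (h : c = a + b) (i : Fin (2 ^ c)) :
    ((finPowSplit h i).1 : ℕ) = i / 2 ^ b := rfl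

@[simp]
lemma finPowSplit_snd_val {c a b : ℕ} (h : c = a + b) (i : Fin (2 ^ c)) :
    ((finPowSplit h i).2 : ℕ) = i % 2 ^ b := rfl

section BlockIndices

variable {T m m' : ℕ} (hm : m ≤ T) (hm' : m' ≤ T)

lemma pdiv_pcomb (p : Fin (2 ^ m')) (r : Fin (2 ^ (T - m'))) :
    pdiv hm (pcomb hm' p r) =
      pcomb (min_le_left m m') (finPowSplit (by omega : m' = min m m' + (m' - m)) p).1
        (finPowSplit (by omega : T - m' = (m - min m m') + ((T - m) - (m' - m))) r).1 := by
  ext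
  simp only [pdiv, pcomb, finPowSplit_fst_val]
  have hlow : min (T - m) (T - m') = T - m - (m' - m) := by omega
  rw [Nat.mul_pow_add_div_pow two_pos r.2, hlow, tsub_tsub_tsub_cancel_left hm',
    tsub_tsub_tsub_cancel_left hm, tsub_min]

lemma pmod_pcomb (p : Fin (2 ^ m')) (r : Fin (2 ^ (T - m'))) :
    pmod (a := m) (pcomb hm' p r) =
      pcomb (Nat.sub_le_sub_right hm' m)
        (finPowSplit (by omega : m' = min m m' + (m' - m)) p).2
        (finPowSplit (by omega : T - m' = (m - min m m') + ((T - m) - (m' - m))) r).2 := by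
  ext
  simp only [pmod, pcomb, finPowSplit_snd_val]
  have hlow : min (T - m) (T - m') = T - m - (m' - m) := by omega
  rw [Nat.mul_pow_add_mod_pow r.2, hlow, tsub_tsub_tsub_cancel_left hm']

end BlockIndices

def finPowSplitProd {c a b c' a' b' : ℕ} (h : c = a + b) (h' : c' = a' + b') :
    Fin (2 ^ c) × Fin (2 ^ c') ≃ (Fin (2 ^ a) × Fin (2 ^ a')) × (Fin (2 ^ b) × Fin (2 ^ b')) :=
  ((finPowSplit h).prodCongr (finPowSplit h')).trans (Equiv.prodProdProdComm _ _ _ _)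

lemma rearr_pkron_eq_submatrix_kronecker {M N m n m' n' : ℕ} (hm : m ≤ M) (hn : n ≤ N)
    (hm' : m' ≤ M) (hn' : n' ≤ N)
    (A : Matrix (Fin (2 ^ m)) (Fin (2 ^ n)) ℝ)
    (B : Matrix (Fin (2 ^ (M - m))) (Fin (2 ^ (N - n))) ℝ) :
    rearr hm' hn' (pkron hm hn A B) =
      (rearr (min_le_left m m') (min_le_left n n') A ⊗ₖ
        rearr (Nat.sub_le_sub_right hm' m) (Nat.sub_le_sub_right hn' n) B).submatrix
        (finPowSplitProd (by omega) (by omega)) (finPowSplitProd (by omega) (by omega)) := by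
  ext ⟨p, q⟩ ⟨r, s⟩
  simp only [rearr, pkron, submatrix_apply, kronecker_apply, finPowSplitProd, Equiv.trans_apply,
    Equiv.prodCongr_apply, Prod.map, Equiv.prodProdProdComm_apply]
  rw [pdiv_pcomb hm hm', pdiv_pcomb hn hn', pmod_pcomb hm hm', pmod_pcomb hn hn']

/-- factorization of the spectral norm of the rearranged Kronecker
product: `‖R_{m',n'}[A ⊗ B]‖_S = ‖R_{m∧m',n∧n'}[A]‖_S · ‖R_{(m'−m)₊,(n'−n)₊}[B]‖_S`. -/
theorem specNorm_rearr_kron {M N m n m' n' : ℕ}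
    (hm : m ≤ M) (hn : n ≤ N) (hm' : m' ≤ M) (hn' : n' ≤ N)
    (A : Matrix (Fin (2 ^ m)) (Fin (2 ^ n)) ℝ)
    (B : Matrix (Fin (2 ^ (M - m))) (Fin (2 ^ (N - n))) ℝ) :
    specNorm (rearr hm' hn' (pkron hm hn A B)) =
      specNorm (rearr (a := min m m') (b := min n n')
          (min_le_left m m') (min_le_left n n') A) *
      specNorm (rearr (a := m' - m) (b := n' - n)
          (Nat.sub_le_sub_right hm' m) (Nat.sub_le_sub_right hn' n) B) := by
  rw [rearr_pkron_eq_submatrix_kronecker, specNorm_submatrix_equiv, specNorm_kronecker]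
end

section
/- Let U, V be subspaces of ℝⁿ with smallest principal angle Θ(U,V) = θ ∈ [0, π/2], and let w ∈ ℝⁿ be a unit vector with ‖P_U w‖ = cos α for some α ∈ [0, π/2], where P_U is the orthogonal projection onto U. If α ≤ θ, then ‖P_V w‖ ≤ cos(θ − α). -/
open Real Set

open scoped RealInnerProductSpace

/-!
Split `w` and a unit vector `v ∈ V` along `U ⊕ Uᗮ`. Writing `‖P_U v‖ = cos β`, the definition of
`θ` gives `β ≥ θ`, and Cauchy–Schwarz on each component gives
`⟪w, v⟫ ≤ cos α cos β + sin α sin β = cos (β - α) ≤ cos (θ - α)`.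
Since `‖P_V w‖` is the supremum of `⟪w, v⟫` over such `v`, the bound follows.
-/

namespace Submodule

variable {E : Type*} [NormedAddCommGroup E] [InnerProductSpace ℝ E]

/-- `sSup ∅ = 0` gives the convention `cos θ = 0` when `U` or `V` is trivial. -/
noncomputable def cosSmallestPrincipalAngle (U V : Submodule ℝ E) : ℝ :=
  sSup {x : ℝ | ∃ u ∈ U, ∃ v ∈ V, ‖u‖ = 1 ∧ ‖v‖ = 1 ∧ x = ⟪u, v⟫}

theorem real_inner_le_cosSmallestPrincipalAngle {U V : Submodule ℝ E} {u v : E}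
    (hu : u ∈ U) (hv : v ∈ V) (hu1 : ‖u‖ = 1) (hv1 : ‖v‖ = 1) :
    ⟪u, v⟫ ≤ U.cosSmallestPrincipalAngle V := by
  refine le_csSup ⟨1, ?_⟩ ⟨u, hu, v, hv, hu1, hv1, rfl⟩
  rintro _ ⟨u, -, v, -, hu1, hv1, rfl⟩
  simpa [hu1, hv1] using real_inner_le_norm u v

theorem cosSmallestPrincipalAngle_nonneg (U V : Submodule ℝ E) :
    0 ≤ U.cosSmallestPrincipalAngle V := by
  by_cases h : ∃ u ∈ U, ∃ v ∈ V, ‖u‖ = 1 ∧ ‖v‖ = 1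
  · obtain ⟨u, hu, v, hv, hu1, hv1⟩ := h
    have h₁ := real_inner_le_cosSmallestPrincipalAngle hu hv hu1 hv1
    have h₂ := real_inner_le_cosSmallestPrincipalAngle (U.neg_mem hu) hv (by rwa [norm_neg]) hv1
    rw [inner_neg_left] at h₂
    linarith
  · push Not at h
    have : {x : ℝ | ∃ u ∈ U, ∃ v ∈ V, ‖u‖ = 1 ∧ ‖v‖ = 1 ∧ x = ⟪u, v⟫} = ∅ := by
      ext x
      simp only [mem_ofPred_eq, mem_empty_iff_false, iff_false]
      rintro ⟨u, hu, v, hv, hu1, hv1, -⟩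
      exact h u hu v hv hu1 hv1
    rw [cosSmallestPrincipalAngle, this, Real.sSup_empty]

theorem norm_starProjection_le_of_forall_inner_le (K : Submodule ℝ E) [K.HasOrthogonalProjection]
    {x : E} {c : ℝ} (hc : 0 ≤ c) (h : ∀ v ∈ K, ‖v‖ = 1 → ⟪x, v⟫ ≤ c) :
    ‖K.starProjection x‖ ≤ c := by
  set p := K.starProjection x
  rcases eq_or_ne p 0 with hp | hp
  · simpa [hp] using hc
  have hp' : 0 < ‖p‖ := norm_pos_iff.mpr hp
  have hxp : ⟪x, p⟫ = ‖p‖ ^ 2 := by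
    simpa [real_inner_comm] using K.re_inner_starProjection_eq_normSq x
  have := h (‖p‖⁻¹ • p) (K.smul_mem _ (K.starProjection_apply_mem x))
    (by rw [norm_smul, norm_inv, norm_norm, inv_mul_cancel₀ hp'.ne'])
  rw [real_inner_smul_right, hxp] at this
  field_simp at this
  exact this

theorem norm_starProjection_le_cosSmallestPrincipalAngle {U V : Submodule ℝ E}
    [U.HasOrthogonalProjection] {v : E} (hv : v ∈ V) (hv1 : ‖v‖ = 1) :
    ‖U.starProjection v‖ ≤ U.cosSmallestPrincipalAngle V := by
  refine U.norm_starProjection_le_of_forall_inner_le (cosSmallestPrincipalAngle_nonneg U V) ?_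
  intro u hu hu1
  rw [real_inner_comm]
  exact real_inner_le_cosSmallestPrincipalAngle hu hv hu1 hv1

theorem real_inner_le_norm_starProjection_mul_add (K : Submodule ℝ E)
    [K.HasOrthogonalProjection] (x y : E) :
    ⟪x, y⟫ ≤ ‖K.starProjection x‖ * ‖K.starProjection y‖ +
      ‖Kᗮ.starProjection x‖ * ‖Kᗮ.starProjection y‖ := by
  have hx := K.starProjection_add_starProjection_orthogonal x
  have hy := K.starProjection_add_starProjection_orthogonal y
  have h₁ : ⟪K.starProjection x, Kᗮ.starProjection y⟫ = 0 :=
    K.inner_right_of_mem_orthogonal (K.starProjection_apply_mem x) (Kᗮ.starProjection_apply_mem y)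
  have h₂ : ⟪Kᗮ.starProjection x, K.starProjection y⟫ = 0 :=
    K.inner_left_of_mem_orthogonal (K.starProjection_apply_mem y) (Kᗮ.starProjection_apply_mem x)
  calc ⟪x, y⟫ = ⟪K.starProjection x + Kᗮ.starProjection x,
        K.starProjection y + Kᗮ.starProjection y⟫ := by rw [hx, hy]
    _ = ⟪K.starProjection x, K.starProjection y⟫ +
        ⟪Kᗮ.starProjection x, Kᗮ.starProjection y⟫ := by
      simp only [inner_add_left, inner_add_right, h₁, h₂, add_zero, zero_add]
    _ ≤ _ := add_le_add (real_inner_le_norm _ _) (real_inner_le_norm _ _)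

end Submodule

theorem Real.cos_mul_add_sin_mul_le_cos_sub {θ α t s : ℝ} (hα : 0 ≤ α) (hαθ : α ≤ θ)
    (hθ : θ ≤ π) (hs : 0 ≤ s) (hts : t ^ 2 + s ^ 2 = 1) (ht : t ≤ cos θ) :
    cos α * t + sin α * s ≤ cos (θ - α) := by
  have ht₁ : -1 ≤ t := by nlinarith
  have ht₂ : t ≤ 1 := by nlinarith
  set β := arccos t
  have hθβ : θ ≤ β := by
    simpa [arccos_cos (hα.trans hαθ) hθ] using arccos_le_arccos ht
  have hcos : cos (β - α) = cos α * t + sin α * s := by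
    rw [cos_sub, cos_arccos ht₁ ht₂, sin_arccos, show 1 - t ^ 2 = s ^ 2 by linarith, sqrt_sq hs]
    ring
  rw [← hcos]
  exact cos_le_cos_of_nonneg_of_le_pi (by linarith) (by linarith [arccos_le_pi t]) (by linarith)

/-- if `U, V ⊆ ℝⁿ` have smallest principal angle `θ ∈ [0, π/2]`,
`w` is a unit vector with `‖P_U w‖ = cos α`, `α ∈ [0, π/2]`, and `α ≤ θ`,
then `‖P_V w‖ ≤ cos (θ − α)`. -/
theorem projection_principal_angle_bound {n : ℕ}
    (U V : Submodule ℝ (EuclideanSpace ℝ (Fin n)))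
    (θ α : ℝ) (hθ : θ ∈ Set.Icc 0 (π / 2)) (hα : α ∈ Set.Icc 0 (π / 2))
    (hcos : Real.cos θ =
      sSup {x : ℝ | ∃ u ∈ U, ∃ v ∈ V, ‖u‖ = 1 ∧ ‖v‖ = 1 ∧ x = (inner ℝ u v : ℝ)})
    (w : EuclideanSpace ℝ (Fin n)) (hw : ‖w‖ = 1)
    (hproj : ‖(U.orthogonalProjectionOnto w : EuclideanSpace ℝ (Fin n))‖ = Real.cos α)
    (hle : α ≤ θ) :
    ‖(V.orthogonalProjectionOnto w : EuclideanSpace ℝ (Fin n))‖ ≤ Real.cos (θ - α) := by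
  obtain ⟨-, hθ⟩ := hθ
  obtain ⟨hα, -⟩ := hα
  rw [← Submodule.starProjection_apply] at hproj
  have hUV : ∀ v ∈ V, ‖v‖ = 1 → ‖U.starProjection v‖ ≤ cos θ := fun v hv hv1 =>
    hcos ▸ Submodule.norm_starProjection_le_cosSmallestPrincipalAngle hv hv1
  have hsin : ‖Uᗮ.starProjection w‖ = sin α := by
    have hw' := U.norm_sq_eq_add_norm_sq_starProjection w
    rw [hw, hproj] at hw'
    refine (pow_left_inj₀ (norm_nonneg _) (sin_nonneg_of_nonneg_of_le_pi hα (by linarith))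
      two_ne_zero).mp ?_
    linarith [sin_sq_add_cos_sq α]
  refine V.norm_starProjection_le_of_forall_inner_le
    (cos_nonneg_of_mem_Icc ⟨by linarith, by linarith⟩) fun v hv hv1 => ?_
  have hv' := U.norm_sq_eq_add_norm_sq_starProjection v
  rw [hv1] at hv'
  calc ⟪w, v⟫
      ≤ ‖U.starProjection w‖ * ‖U.starProjection v‖ +
          ‖Uᗮ.starProjection w‖ * ‖Uᗮ.starProjection v‖ :=
        U.real_inner_le_norm_starProjection_mul_add w v
    _ = cos α * ‖U.starProjection v‖ + sin α * ‖Uᗮ.starProjection v‖ := by rw [hproj, hsin]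
    _ ≤ cos (θ - α) :=
        cos_mul_add_sin_mul_le_cos_sub hα hle (by linarith) (norm_nonneg _) (by linarith)
          (hUV v hv hv1)
end

section
/- Let M₁, M₂ be real matrices of the same dimensions with ‖M₁‖_S = μ, ‖M₂‖_S = ν. Let θ be the smallest principal angle between the column spaces of M₁ and M₂, and η the smallest principal angle between their row spaces. Then ‖M₁ + M₂‖_S² ≤ (1/2)[ μ² + ν² + 2μν cos θ cos η + sqrt( (μ² + ν² + 2μν cos θ cos η)² − 4μ²ν² sin²θ sin²η ) ]. -/
/-!
Let `σ = ‖M₁ + M₂‖` and take unit vectors `u`, `w` with `(M₁ + M₂) u = σ w` and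
`(M₁ + M₂)ᵀ w = σ u`. If `P₁` is the orthogonal projection onto the column space of `M₁`, then
`σ P₁ w = M₁ u + P₁ M₂ u`, so `σ ‖P₁ w‖ ≤ ‖M₁ u‖ + cos θ ‖M₂ u‖`, while `‖M₁ᵀ w‖ ≤ μ ‖P₁ w‖`
because `M₁ᵀ` kills the orthogonal complement of that column space; the same holds for `M₂` and,
with `η`, for the row spaces. Chaining these estimates shows that the nonnegative vector
`(‖M₁ u‖ + cos θ ‖M₂ u‖, ‖M₂ u‖ + cos θ ‖M₁ u‖)` is a sub-eigenvector at `σ²` of a nonnegative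
`2 × 2` matrix, so `σ²` is at most its Perron root, which is the stated bound.
-/

open Matrix Real Set

/-- The set of cosines of angles between vectors of the column spaces of two matrices;
its supremum is the cosine of the smallest principal angle. -/
noncomputable def angleSet {P Q R : ℕ} (M1 : Matrix (Fin P) (Fin Q) ℝ)
    (M2 : Matrix (Fin P) (Fin R) ℝ) : Set ℝ :=
  {x | ∃ (u : Fin Q → ℝ) (v : Fin R → ℝ), M1.mulVec u ≠ 0 ∧ M2.mulVec v ≠ 0 ∧
    x = (∑ i, M1.mulVec u i * M2.mulVec v i) / (vnorm (M1.mulVec u) * vnorm (M2.mulVec v))}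

open scoped RealInnerProductSpace

/-- The largest eigenvalue of the matrix `!![a, b; c, d]` when `b * c ≥ 0`. -/
noncomputable def perronRoot (a b c d : ℝ) : ℝ :=
  (a + d + √((a - d) ^ 2 + 4 * b * c)) / 2

lemma perronRoot_nonneg {a b c d : ℝ} (ha : 0 ≤ a) (hd : 0 ≤ d) :
    0 ≤ perronRoot a b c d := by
  unfold perronRoot
  positivity

lemma le_perronRoot_of_mul_le {a b c d v₁ v₂ y : ℝ} (hb : 0 ≤ b) (hc : 0 ≤ c)
    (hv : 0 < v₁ + v₂) (h₁ : y * v₁ ≤ a * v₁ + b * v₂) (h₂ : y * v₂ ≤ c * v₁ + d * v₂) :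
    y ≤ perronRoot a b c d := by
  by_contra! hy
  unfold perronRoot at hy
  have hdisc : (a - d) ^ 2 ≤ (a - d) ^ 2 + 4 * b * c := by nlinarith [mul_nonneg hb hc]
  obtain ⟨had, hda⟩ := abs_le.mp (Real.abs_le_sqrt hdisc)
  have hsq := Real.sq_sqrt ((sq_nonneg _).trans hdisc)
  have hya : 0 < y - a := by linarith
  have hyd : 0 < y - d := by linarith
  -- `2y - a - d` exceeds the square root, and `(2y - a - d)² - (a - d)² = 4 (y - a) (y - d)`
  have hgap : b * c < (y - a) * (y - d) := by nlinarith
  have hv₁ : (y - a) * (y - d) * v₁ ≤ b * c * v₁ :=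
    calc (y - a) * (y - d) * v₁ = (y - d) * ((y - a) * v₁) := by ring
      _ ≤ (y - d) * (b * v₂) := mul_le_mul_of_nonneg_left (by linarith) hyd.le
      _ = b * ((y - d) * v₂) := by ring
      _ ≤ b * (c * v₁) := mul_le_mul_of_nonneg_left (by linarith) hb
      _ = b * c * v₁ := by ring
  have hv₂ : (y - a) * (y - d) * v₂ ≤ b * c * v₂ :=
    calc (y - a) * (y - d) * v₂ = (y - a) * ((y - d) * v₂) := by ring
      _ ≤ (y - a) * (c * v₁) := mul_le_mul_of_nonneg_left (by linarith) hya.le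
      _ = c * ((y - a) * v₁) := by ring
      _ ≤ c * (b * v₂) := mul_le_mul_of_nonneg_left (by linarith) hc
      _ = b * c * v₂ := by ring
  linarith [mul_pos (sub_pos.mpr hgap) hv]

section InnerProductSpace

variable {E F : Type*} [NormedAddCommGroup E] [InnerProductSpace ℝ E]
  [NormedAddCommGroup F] [InnerProductSpace ℝ F]

def CosPrincipalAngleLE (U V : Submodule ℝ F) (c : ℝ) : Prop :=
  ∀ y ∈ U, ∀ z ∈ V, ⟪y, z⟫ ≤ c * (‖y‖ * ‖z‖)

namespace CosPrincipalAngleLE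

variable {U V : Submodule ℝ F} {c : ℝ}

lemma symm (h : CosPrincipalAngleLE U V c) : CosPrincipalAngleLE V U c := by
  intro y hy z hz
  rw [real_inner_comm, mul_comm ‖y‖]
  exact h z hz y hy

lemma norm_starProjection_le [U.HasOrthogonalProjection] (h : CosPrincipalAngleLE U V c)
    (hc : 0 ≤ c) {z : F} (hz : z ∈ V) : ‖U.starProjection z‖ ≤ c * ‖z‖ := by
  have hsq : ‖U.starProjection z‖ ^ 2 ≤ c * ‖z‖ * ‖U.starProjection z‖ :=
    calc ‖U.starProjection z‖ ^ 2 = ⟪U.starProjection z, z⟫ := by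
          simpa using (U.re_inner_starProjection_eq_normSq z).symm
      _ ≤ c * (‖U.starProjection z‖ * ‖z‖) := h _ (U.starProjection_apply_mem z) z hz
      _ = c * ‖z‖ * ‖U.starProjection z‖ := by ring
  rcases (norm_nonneg (U.starProjection z)).eq_or_lt with h0 | hpos
  · rw [← h0]; positivity
  · nlinarith

end CosPrincipalAngleLE

namespace ContinuousLinearMap

lemma apply_starProjection_range_adjoint [CompleteSpace E] [CompleteSpace F] (T : E →L[ℝ] F)
    [(adjoint T).range.HasOrthogonalProjection] (z : E) :
    T ((adjoint T).range.starProjection z) = T z := by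
  have hker : z - (adjoint T).range.starProjection z ∈ T.ker := by
    simpa [orthogonal_range, adjoint_adjoint] using
      (adjoint T).range.sub_starProjection_mem_orthogonal z
  rw [LinearMap.mem_ker, map_sub, sub_eq_zero] at hker
  exact hker.symm

lemma norm_apply_le_mul_norm_starProjection [CompleteSpace E] [CompleteSpace F] (T : E →L[ℝ] F)
    [(adjoint T).range.HasOrthogonalProjection] {μ : ℝ} (hT : ‖T‖ ≤ μ) (z : E) :
    ‖T z‖ ≤ μ * ‖(adjoint T).range.starProjection z‖ := by
  rw [← T.apply_starProjection_range_adjoint z]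
  exact T.le_of_opNorm_le hT _

lemma norm_adjoint_apply_le_mul_norm_starProjection [CompleteSpace E] [CompleteSpace F]
    (T : E →L[ℝ] F) [T.range.HasOrthogonalProjection] {μ : ℝ} (hT : ‖T‖ ≤ μ) (z : F) :
    ‖adjoint T z‖ ≤ μ * ‖T.range.starProjection z‖ := by
  have : (adjoint (adjoint T)).range.HasOrthogonalProjection := by
    rwa [adjoint_adjoint]
  simpa [adjoint_adjoint] using
    (adjoint T).norm_apply_le_mul_norm_starProjection (by rwa [LinearIsometryEquiv.norm_map]) z

lemma exists_norm_eq_one_norm_apply_eq_opNorm [FiniteDimensional ℝ E] [Nontrivial E]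
    (T : E →L[ℝ] F) : ∃ u : E, ‖u‖ = 1 ∧ ‖T u‖ = ‖T‖ := by
  have hK := (isCompact_sphere (0 : E) 1).image T.continuous.norm
  obtain ⟨u, hu, hTu⟩ :=
    hK.sSup_mem ((NormedSpace.sphere_nonempty.mpr zero_le_one).image _)
  rw [T.sSup_sphere_eq_norm] at hTu
  exact ⟨u, mem_sphere_zero_iff_norm.mp hu, hTu⟩

lemma adjoint_apply_apply_eq_of_norm_apply_eq_opNorm [CompleteSpace E] [CompleteSpace F]
    (T : E →L[ℝ] F) {u : E} (hu : ‖u‖ = 1) (hTu : ‖T u‖ = ‖T‖) :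
    adjoint T (T u) = ‖T‖ ^ 2 • u := by
  set v := adjoint T (T u)
  have hinner : ⟪v, u⟫ = ‖T‖ ^ 2 := by
    rw [adjoint_inner_left, real_inner_self_eq_norm_sq, hTu]
  have hv : ‖v‖ ≤ ‖T‖ ^ 2 :=
    calc ‖v‖ ≤ ‖adjoint T‖ * ‖T u‖ := (adjoint T).le_opNorm _
      _ = ‖T‖ ^ 2 := by rw [LinearIsometryEquiv.norm_map, hTu, sq]
  have hdist : ‖v - ‖T‖ ^ 2 • u‖ ^ 2 ≤ 0 := by
    rw [norm_sub_sq_real, real_inner_smul_right, hinner, norm_smul, hu,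
      Real.norm_of_nonneg (by positivity), mul_one]
    nlinarith [norm_nonneg v]
  rw [← sub_eq_zero, ← norm_eq_zero]
  exact pow_eq_zero_iff two_ne_zero |>.mp (le_antisymm hdist (sq_nonneg _))

lemma exists_singular_pair [FiniteDimensional ℝ E] [CompleteSpace F] (T : E →L[ℝ] F)
    (hT : 0 < ‖T‖) :
    ∃ (u : E) (w : F), ‖u‖ = 1 ∧ ‖w‖ = 1 ∧ T u = ‖T‖ • w ∧ adjoint T w = ‖T‖ • u := by
  obtain ⟨v, hv⟩ : ∃ v, T v ≠ 0 := by
    by_contra! h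
    exact hT.ne' (norm_eq_zero.mpr (ext h))
  have : Nontrivial E := nontrivial_of_ne v 0 fun h => hv (by rw [h, map_zero])
  obtain ⟨u, hu, hTu⟩ := T.exists_norm_eq_one_norm_apply_eq_opNorm
  refine ⟨u, ‖T‖⁻¹ • T u, hu, ?_, (smul_inv_smul₀ hT.ne' _).symm, ?_⟩
  · rw [norm_smul, norm_inv, norm_norm, hTu, inv_mul_cancel₀ hT.ne']
  · rw [map_smul, T.adjoint_apply_apply_eq_of_norm_apply_eq_opNorm hu hTu, smul_smul, sq,
      inv_mul_cancel_left₀ hT.ne']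

lemma mul_norm_starProjection_range_le {A B : E →L[ℝ] F} [A.range.HasOrthogonalProjection]
    {c : ℝ} (hAB : CosPrincipalAngleLE A.range B.range c) (hc : 0 ≤ c)
    {u : E} {w : F} {x : ℝ} (hx : 0 ≤ x) (h : (A + B) u = x • w) :
    x * ‖A.range.starProjection w‖ ≤ ‖A u‖ + c * ‖B u‖ :=
  calc x * ‖A.range.starProjection w‖ = ‖A.range.starProjection (x • w)‖ := by
        rw [map_smul, norm_smul, Real.norm_of_nonneg hx]
    _ = ‖A u + A.range.starProjection (B u)‖ := by
        rw [← h, _root_.add_apply, map_add,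
          A.range.starProjection_eq_self_iff.mpr (show A u ∈ A.range from ⟨u, rfl⟩)]
    _ ≤ ‖A u‖ + ‖A.range.starProjection (B u)‖ := norm_add_le _ _
    _ ≤ ‖A u‖ + c * ‖B u‖ := by
        gcongr
        exact hAB.norm_starProjection_le hc (show B u ∈ B.range from ⟨u, rfl⟩)

section FiniteDimensional

variable [FiniteDimensional ℝ E] [FiniteDimensional ℝ F] {A B : E →L[ℝ] F} {μ ν c d : ℝ}

lemma sq_mul_norm_apply_le_of_singular_pair (hA : ‖A‖ ≤ μ) (hB : ‖B‖ ≤ ν) (hc : 0 ≤ c)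
    (hd : 0 ≤ d) (hcol : CosPrincipalAngleLE A.range B.range c)
    (hrow : CosPrincipalAngleLE (adjoint A).range (adjoint B).range d)
    {u : E} {w : F} {x : ℝ} (hx : 0 ≤ x) (hu : (A + B) u = x • w)
    (hw : adjoint (A + B) w = x • u) :
    x ^ 2 * ‖A u‖ ≤ μ * (μ * (‖A u‖ + c * ‖B u‖) + d * (ν * (‖B u‖ + c * ‖A u‖))) := by
  have hμ : 0 ≤ μ := (norm_nonneg A).trans hA
  have hν : 0 ≤ ν := (norm_nonneg B).trans hB
  set PA := A.range.starProjection
  set PB := B.range.starProjection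
  set PA' := (adjoint A).range.starProjection
  have hPA := mul_norm_starProjection_range_le hcol hc hx hu
  have hPB := mul_norm_starProjection_range_le hcol.symm hc hx (by rwa [add_comm] at hu)
  have hPA' := mul_norm_starProjection_range_le hrow hd hx (by rwa [map_add] at hw)
  have hAw := A.norm_adjoint_apply_le_mul_norm_starProjection hA w
  have hBw := B.norm_adjoint_apply_le_mul_norm_starProjection hB w
  have hAu := A.norm_apply_le_mul_norm_starProjection hA u
  calc x ^ 2 * ‖A u‖
      ≤ x ^ 2 * (μ * ‖PA' u‖) := by gcongr
    _ = μ * (x * (x * ‖PA' u‖)) := by ring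
    _ ≤ μ * (x * (‖adjoint A w‖ + d * ‖adjoint B w‖)) := by gcongr
    _ = μ * (x * ‖adjoint A w‖ + d * (x * ‖adjoint B w‖)) := by ring
    _ ≤ μ * (x * (μ * ‖PA w‖) + d * (x * (ν * ‖PB w‖))) := by gcongr
    _ = μ * (μ * (x * ‖PA w‖) + d * (ν * (x * ‖PB w‖))) := by ring
    _ ≤ μ * (μ * (‖A u‖ + c * ‖B u‖) + d * (ν * (‖B u‖ + c * ‖A u‖))) := by gcongr

theorem sq_norm_add_le_perronRoot (hA : ‖A‖ ≤ μ) (hB : ‖B‖ ≤ ν) (hc : 0 ≤ c) (hd : 0 ≤ d)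
    (hcol : CosPrincipalAngleLE A.range B.range c)
    (hrow : CosPrincipalAngleLE (adjoint A).range (adjoint B).range d) :
    ‖A + B‖ ^ 2 ≤
      perronRoot (μ ^ 2 + μ * ν * c * d) (μ * ν * d + ν ^ 2 * c) (μ * ν * d + μ ^ 2 * c)
        (ν ^ 2 + μ * ν * c * d) := by
  have hμ : 0 ≤ μ := (norm_nonneg A).trans hA
  have hν : 0 ≤ ν := (norm_nonneg B).trans hB
  rcases (norm_nonneg (A + B)).eq_or_lt with h0 | hpos
  · rw [← h0, sq, zero_mul]
    exact perronRoot_nonneg (by positivity) (by positivity)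
  obtain ⟨u, w, hu, hw, hTu, hTw⟩ := (A + B).exists_singular_pair hpos
  have ha := sq_mul_norm_apply_le_of_singular_pair hA hB hc hd hcol hrow hpos.le hTu hTw
  have hTu' : (B + A) u = ‖A + B‖ • w := by rwa [add_comm B A]
  have hTw' : adjoint (B + A) w = ‖A + B‖ • u := by rwa [add_comm B A]
  have hb :=
    sq_mul_norm_apply_le_of_singular_pair hB hA hc hd hcol.symm hrow.symm hpos.le hTu' hTw'
  have hsum : ‖A + B‖ ≤ ‖A u‖ + ‖B u‖ := by
    calc ‖A + B‖ = ‖(A + B) u‖ := by rw [hTu, norm_smul, hw, norm_norm, mul_one]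
      _ ≤ ‖A u‖ + ‖B u‖ := norm_add_le _ _
  apply le_perronRoot_of_mul_le (v₁ := ‖A u‖ + c * ‖B u‖) (v₂ := ‖B u‖ + c * ‖A u‖)
    (by positivity) (by positivity) (by nlinarith [norm_nonneg (A u), norm_nonneg (B u)])
  · linarith [mul_le_mul_of_nonneg_left hb hc]
  · linarith [mul_le_mul_of_nonneg_left ha hc]

end FiniteDimensional

end ContinuousLinearMap

end InnerProductSpace

section Matrix

variable {m n : Type*} [Fintype m] [Fintype n]

lemma vnorm_eq_norm_toLp (v : n → ℝ) : vnorm v = ‖WithLp.toLp 2 v‖ := by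
  simp [vnorm, EuclideanSpace.norm_eq]

lemma sum_mul_eq_inner_toLp (x y : n → ℝ) :
    ∑ i, x i * y i = ⟪WithLp.toLp 2 x, WithLp.toLp 2 y⟫ := by
  simp [EuclideanSpace.inner_toLp_toLp, dotProduct, mul_comm]

variable [DecidableEq n]

noncomputable def Matrix.euclideanCLM (M : Matrix m n ℝ) :
    EuclideanSpace ℝ n →L[ℝ] EuclideanSpace ℝ m :=
  LinearMap.toContinuousLinearMap (toEuclideanLin M)

lemma Matrix.euclideanCLM_toLp (M : Matrix m n ℝ) (v : n → ℝ) :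
    M.euclideanCLM (WithLp.toLp 2 v) = WithLp.toLp 2 (M *ᵥ v) :=
  rfl

lemma Matrix.euclideanCLM_add (M N : Matrix m n ℝ) :
    (M + N).euclideanCLM = M.euclideanCLM + N.euclideanCLM := by
  rw [euclideanCLM, euclideanCLM, euclideanCLM, map_add, map_add]

lemma Matrix.euclideanCLM_transpose [DecidableEq m] (M : Matrix m n ℝ) :
    Mᵀ.euclideanCLM = ContinuousLinearMap.adjoint M.euclideanCLM := by
  rw [euclideanCLM, ← conjTranspose_eq_transpose_of_trivial,
    toEuclideanLin_conjTranspose_eq_adjoint, LinearMap.adjoint_toContinuousLinearMap]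
  rfl

lemma specNorm_eq_norm_euclideanCLM (M : Matrix m n ℝ) : specNorm M = ‖M.euclideanCLM‖ := by
  rw [← M.euclideanCLM.sSup_sphere_eq_norm, specNorm]
  congr 1
  ext x
  constructor
  · rintro ⟨u, hu, rfl⟩
    refine ⟨WithLp.toLp 2 u, ?_, ?_⟩
    · rwa [mem_sphere_zero_iff_norm, ← vnorm_eq_norm_toLp]
    · rw [vnorm_eq_norm_toLp, ← M.euclideanCLM_toLp]
  · rintro ⟨⟨u⟩, hu, rfl⟩
    refine ⟨u, ?_, ?_⟩
    · rwa [vnorm_eq_norm_toLp, ← mem_sphere_zero_iff_norm]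
    · rw [vnorm_eq_norm_toLp, ← M.euclideanCLM_toLp]

end Matrix

lemma cosPrincipalAngleLE_sSup_angleSet {P Q R : ℕ} (A : Matrix (Fin P) (Fin Q) ℝ)
    (B : Matrix (Fin P) (Fin R) ℝ) :
    CosPrincipalAngleLE A.euclideanCLM.range B.euclideanCLM.range (sSup (angleSet A B)) := by
  have hbdd : BddAbove (angleSet A B) := by
    refine ⟨1, ?_⟩
    rintro _ ⟨u, v, -, -, rfl⟩
    rw [sum_mul_eq_inner_toLp, vnorm_eq_norm_toLp, vnorm_eq_norm_toLp]
    exact (abs_le.mp (abs_real_inner_div_norm_mul_norm_le_one _ _)).2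
  rintro _ ⟨⟨u⟩, rfl⟩ _ ⟨⟨v⟩, rfl⟩
  simp only [ContinuousLinearMap.coe_coe, euclideanCLM_toLp]
  rcases eq_or_ne (A *ᵥ u) 0 with hu | hu
  · simp [hu]
  rcases eq_or_ne (B *ᵥ v) 0 with hv | hv
  · simp [hv]
  have hAu : 0 < ‖WithLp.toLp 2 (A *ᵥ u)‖ := norm_pos_iff.mpr (by simpa using hu)
  have hBv : 0 < ‖WithLp.toLp 2 (B *ᵥ v)‖ := norm_pos_iff.mpr (by simpa using hv)
  have hmem := le_csSup hbdd ⟨u, v, hu, hv, rfl⟩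
  rw [sum_mul_eq_inner_toLp, vnorm_eq_norm_toLp, vnorm_eq_norm_toLp,
    div_le_iff₀ (mul_pos hAu hBv)] at hmem
  exact hmem

/-- with `μ = ‖M₁‖_S`, `ν = ‖M₂‖_S`, `θ` the smallest principal angle
between the column spaces and `η` between the row spaces,
`‖M₁ + M₂‖_S² ≤ (1/2)[μ² + ν² + 2μν cos θ cos η + √((μ²+ν²+2μν cos θ cos η)² − 4μ²ν² sin²θ sin²η)]`. -/
theorem specNorm_add_principal_angle_bound {P Q : ℕ}
    (M1 M2 : Matrix (Fin P) (Fin Q) ℝ) (μ ν θ η : ℝ)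
    (hμ : specNorm M1 = μ) (hν : specNorm M2 = ν)
    (hθmem : θ ∈ Set.Icc 0 (π / 2)) (hηmem : η ∈ Set.Icc 0 (π / 2))
    (hθ : Real.cos θ = sSup (angleSet M1 M2))
    (hη : Real.cos η = sSup (angleSet M1ᵀ M2ᵀ)) :
    specNorm (M1 + M2) ^ 2 ≤
      (1 / 2) * (μ ^ 2 + ν ^ 2 + 2 * μ * ν * Real.cos θ * Real.cos η +
        Real.sqrt ((μ ^ 2 + ν ^ 2 + 2 * μ * ν * Real.cos θ * Real.cos η) ^ 2 -
          4 * μ ^ 2 * ν ^ 2 * Real.sin θ ^ 2 * Real.sin η ^ 2)) := by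
  have hcθ : 0 ≤ cos θ := cos_nonneg_of_mem_Icc ⟨by linarith [hθmem.1, pi_pos], hθmem.2⟩
  have hcη : 0 ≤ cos η := cos_nonneg_of_mem_Icc ⟨by linarith [hηmem.1, pi_pos], hηmem.2⟩
  have hcol := cosPrincipalAngleLE_sSup_angleSet M1 M2
  have hrow := cosPrincipalAngleLE_sSup_angleSet M1ᵀ M2ᵀ
  rw [← hθ] at hcol
  rw [← hη, euclideanCLM_transpose, euclideanCLM_transpose] at hrow
  rw [specNorm_eq_norm_euclideanCLM] at hμ hν ⊢
  rw [euclideanCLM_add]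
  calc _ ≤ _ := ContinuousLinearMap.sq_norm_add_le_perronRoot hμ.le hν.le hcθ hcη hcol hrow
    _ = _ := by
      simp only [perronRoot, Real.sin_sq]
      ring_nf
end

section
/- For all μ, ν ≥ 0, θ, η ∈ [0, π/2], and α ∈ [0, π/2] with α ≤ η: μ² cos²α + ν² cos²(η−α) + 2μν cos θ cos α cos(η−α) ≤ (1/2)[ μ² + ν² + 2μν cos θ cos η + sqrt( (μ² + ν² + 2μν cos θ cos η)² − 4μ²ν² sin²θ sin²η ) ]. -/
/-!
The left-hand side is the quadratic form of a symmetric 2 × 2 matrix evaluated at the unit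
vector `(cos α, sin α)`. Such a form equals `(p + r) / 2 + A cos 2α + B sin 2α`, so it is at most
`(p + r) / 2 + √(A² + B²)`, the larger eigenvalue of the matrix; for the matrix at hand the trace
and the discriminant are the two expressions on the right-hand side.
-/

open Real

theorem mul_add_mul_le_sqrt_of_sq_add_sq_eq_one (A B x y : ℝ) (hxy : x ^ 2 + y ^ 2 = 1) :
    A * x + B * y ≤ √(A ^ 2 + B ^ 2) :=
  (le_abs_self _).trans <| Real.abs_le_sqrt <| by
    nlinarith [sq_nonneg (A * y - B * x)]

theorem quadratic_form_le_of_sq_add_sq_eq_one (p q r c s : ℝ) (hcs : c ^ 2 + s ^ 2 = 1) :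
    p * c ^ 2 + 2 * q * c * s + r * s ^ 2 ≤ (p + r + √((p - r) ^ 2 + 4 * q ^ 2)) / 2 := by
  have hdouble : (c ^ 2 - s ^ 2) ^ 2 + (2 * c * s) ^ 2 = 1 := by
    linear_combination (c ^ 2 + s ^ 2 + 1) * hcs
  have hcs_le := mul_add_mul_le_sqrt_of_sq_add_sq_eq_one (p - r) (2 * q) _ _ hdouble
  rw [mul_pow, show (2 : ℝ) ^ 2 = 4 by norm_num] at hcs_le
  linear_combination hcs_le / 2 + (p + r) / 2 * hcs

theorem cos_combination_le_general {μ ν θ η α : ℝ} :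
    μ ^ 2 * Real.cos α ^ 2 + ν ^ 2 * Real.cos (η - α) ^ 2 +
      2 * μ * ν * Real.cos θ * Real.cos α * Real.cos (η - α) ≤
    (1 / 2) * (μ ^ 2 + ν ^ 2 + 2 * μ * ν * Real.cos θ * Real.cos η +
      Real.sqrt ((μ ^ 2 + ν ^ 2 + 2 * μ * ν * Real.cos θ * Real.cos η) ^ 2 -
        4 * μ ^ 2 * ν ^ 2 * Real.sin θ ^ 2 * Real.sin η ^ 2)) := by
  have hform := quadratic_form_le_of_sq_add_sq_eq_one
    (μ ^ 2 + ν ^ 2 * cos η ^ 2 + 2 * μ * ν * cos θ * cos η)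
    ((ν ^ 2 * cos η + μ * ν * cos θ) * sin η) (ν ^ 2 * sin η ^ 2) _ _ (cos_sq_add_sin_sq α)
  have htrace : μ ^ 2 + ν ^ 2 * cos η ^ 2 + 2 * μ * ν * cos θ * cos η + ν ^ 2 * sin η ^ 2 =
      μ ^ 2 + ν ^ 2 + 2 * μ * ν * cos θ * cos η := by
    linear_combination ν ^ 2 * cos_sq_add_sin_sq η
  have hdisc : (μ ^ 2 + ν ^ 2 * cos η ^ 2 + 2 * μ * ν * cos θ * cos η - ν ^ 2 * sin η ^ 2) ^ 2 +
        4 * ((ν ^ 2 * cos η + μ * ν * cos θ) * sin η) ^ 2 =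
      (μ ^ 2 + ν ^ 2 + 2 * μ * ν * cos θ * cos η) ^ 2 -
        4 * μ ^ 2 * ν ^ 2 * sin θ ^ 2 * sin η ^ 2 := by
    linear_combination (ν ^ 4 * (1 + cos η ^ 2 + sin η ^ 2) + 4 * μ * ν ^ 3 * cos θ * cos η +
        2 * μ ^ 2 * ν ^ 2) * sin_sq_add_cos_sq η + 4 * μ ^ 2 * ν ^ 2 * sin η ^ 2 * sin_sq_add_cos_sq θ
  rw [htrace, hdisc] at hform
  rw [cos_sub]
  linear_combination hform

/-- the real-analytic inequality behind the spectral norm bound for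
a sum of two matrices. -/
theorem cos_combination_le {μ ν θ η α : ℝ} (hμ : 0 ≤ μ) (hν : 0 ≤ ν)
    (hθ : θ ∈ Set.Icc 0 (π / 2)) (hη : η ∈ Set.Icc 0 (π / 2))
    (hα : α ∈ Set.Icc 0 (π / 2)) (hαη : α ≤ η) :
    μ ^ 2 * Real.cos α ^ 2 + ν ^ 2 * Real.cos (η - α) ^ 2 +
      2 * μ * ν * Real.cos θ * Real.cos α * Real.cos (η - α) ≤
    (1 / 2) * (μ ^ 2 + ν ^ 2 + 2 * μ * ν * Real.cos θ * Real.cos η +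
      Real.sqrt ((μ ^ 2 + ν ^ 2 + 2 * μ * ν * Real.cos θ * Real.cos η) ^ 2 -
        4 * μ ^ 2 * ν ^ 2 * Real.sin θ ^ 2 * Real.sin η ^ 2)) :=
  cos_combination_le_general
end
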